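/- Let p be an odd prime and d an integer that is a quadratic residue mod p with p ∤ d, and let z be an integer with z² ≡ d (mod p) and p ∤ z. Then D_n(d,z) is not divisible by p for all n ≥ 1, and the sequence of p-adic rationals Q_n(d,z) = N_n(d,z)/D_n(d,z) converges in ℚ_p to a square root of d. -/

import Mathlib

/-!
By Hensel's lemma `d` has a square root `α ∈ ℤ_[p]` with `α ≡ z (mod p)`. Expanding binomially,
`(z ± α)ⁿ = Nₙ ± α Dₙ`, so `2α Dₙ = (z + α)ⁿ - (z - α)ⁿ` and `Nₙ / Dₙ - α = (z - α)ⁿ / Dₙ`.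
Since `|z + α| = |2α| = 1` while `|z - α| < 1`, the ultrametric inequality gives `|Dₙ| = 1`, and
then `|Nₙ / Dₙ - α| = |z - α|ⁿ → 0`.
-/

/-- Rédei polynomial `N_n(d,z)` over the integers. -/
def redeiN (d z : ℤ) (n : ℕ) : ℤ :=
  ∑ i ∈ Finset.range (n / 2 + 1), (n.choose (2 * i) : ℤ) * d ^ i * z ^ (n - 2 * i)

/-- Rédei polynomial `D_n(d,z)` over the integers. -/
def redeiD (d z : ℤ) (n : ℕ) : ℤ :=
  ∑ i ∈ Finset.range (n / 2 + 1), (n.choose (2 * i + 1) : ℤ) * d ^ i * z ^ (n - 2 * i - 1)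

open Filter Finset

theorem Finset.sum_range_two_mul {M : Type*} [AddCommMonoid M] (f : ℕ → M) (m : ℕ) :
    ∑ k ∈ range (2 * m), f k = ∑ i ∈ range m, (f (2 * i) + f (2 * i + 1)) := by
  induction m with
  | zero => simp
  | succ m ih => rw [mul_add_one, sum_range_succ, sum_range_succ, sum_range_succ, ih, add_assoc]

theorem redei_add_pow {R : Type*} [CommRing R] {d : ℤ} {α : R} (hα : α ^ 2 = d) (z : ℤ) (n : ℕ) :
    ((z : R) + α) ^ n = redeiN d z n + α * redeiD d z n := by
  set f : ℕ → R := fun k => α ^ k * (z : R) ^ (n - k) * (n.choose k : R)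
  have hvanish : ∀ k ∈ range (2 * (n / 2 + 1)), k ∉ range (n + 1) → f k = 0 := by
    intro k _ hk
    simp [f, Nat.choose_eq_zero_of_lt (by simpa using hk : n < k)]
  rw [add_comm, add_pow, sum_subset (range_subset_range.2 (by omega)) hvanish,
    sum_range_two_mul, sum_add_distrib, redeiN, redeiD]
  push_cast
  rw [mul_sum]
  congr 1 <;> refine sum_congr rfl fun i _ => ?_
  · simp only [f, pow_mul, hα]
    ring
  · simp only [f, pow_succ, pow_mul, hα, Nat.sub_sub]
    ring

theorem redei_sub_pow {R : Type*} [CommRing R] {d : ℤ} {α : R} (hα : α ^ 2 = d) (z : ℤ) (n : ℕ) :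
    ((z : R) - α) ^ n = redeiN d z n - α * redeiD d z n := by
  rw [sub_eq_add_neg, redei_add_pow (by rwa [neg_sq]), neg_mul, sub_eq_add_neg]

theorem IsUltrametricDist.norm_sub_eq_left_of_norm_lt {E : Type*} [SeminormedAddCommGroup E]
    [IsUltrametricDist E] {x y : E} (h : ‖y‖ < ‖x‖) : ‖x - y‖ = ‖x‖ := by
  rw [sub_eq_add_neg, norm_add_eq_max_of_norm_ne_norm (by rw [norm_neg]; exact h.ne'), norm_neg,
    max_eq_left h.le]

section Ultrametric

open IsUltrametricDist

variable {K : Type*} [NormedField K] [IsUltrametricDist K] {d z : ℤ} {α : K}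

theorem norm_redeiD_eq_one (hα : α ^ 2 = d) (hzα : ‖(z : K) - α‖ < 1) (h2z : ‖2 * (z : K)‖ = 1)
    {n : ℕ} (hn : n ≠ 0) : ‖(redeiD d z n : K)‖ = 1 := by
  have hplus : ‖(z : K) + α‖ = 1 := by
    rw [show (z : K) + α = 2 * z - (z - α) by ring, norm_sub_eq_left_of_norm_lt (h2z ▸ hzα), h2z]
  have hpow : ‖((z : K) - α) ^ n‖ < ‖((z : K) + α) ^ n‖ := by
    rw [norm_pow, norm_pow, hplus, one_pow]
    exact pow_lt_one₀ (norm_nonneg _) hzα hn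
  have h2α : ‖2 * α‖ = 1 := by
    rw [show 2 * α = (z + α) - (z - α) by ring, norm_sub_eq_left_of_norm_lt (hplus ▸ hzα), hplus]
  have hdiff : 2 * α * redeiD d z n = ((z : K) + α) ^ n - ((z : K) - α) ^ n := by
    rw [redei_add_pow hα, redei_sub_pow hα]
    ring
  have := congrArg norm hdiff
  rwa [norm_mul, h2α, one_mul, norm_sub_eq_left_of_norm_lt hpow, norm_pow, hplus, one_pow] at this

theorem tendsto_redeiN_div_redeiD (hα : α ^ 2 = d) (hzα : ‖(z : K) - α‖ < 1)
    (h2z : ‖2 * (z : K)‖ = 1) :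
    Tendsto (fun n => (redeiN d z n : K) / redeiD d z n) atTop (nhds α) := by
  rw [tendsto_iff_norm_sub_tendsto_zero]
  refine (tendsto_pow_atTop_nhds_zero_of_lt_one (norm_nonneg _) hzα).congr' ?_
  filter_upwards [eventually_ne_atTop 0] with n hn
  have hD := norm_redeiD_eq_one hα hzα h2z hn
  have hD0 : (redeiD d z n : K) ≠ 0 := norm_ne_zero_iff.1 (hD.trans_ne one_ne_zero)
  rw [div_sub' hD0, ← mul_comm α, ← redei_sub_pow hα, norm_div, hD, div_one, norm_pow]

end Ultrametric

theorem PadicInt.exists_sq_eq_of_norm_sq_sub_lt_one {p : ℕ} [Fact p.Prime] {a z : ℤ_[p]}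
    (hz : ‖z ^ 2 - a‖ < 1) (h2z : ‖2 * z‖ = 1) : ∃ α : ℤ_[p], α ^ 2 = a ∧ ‖α - z‖ < 1 := by
  have hderiv : ‖(Polynomial.X ^ 2 - Polynomial.C a).derivative.aeval z‖ = 1 := by
    simpa [one_add_one_eq_two] using h2z
  obtain ⟨α, hroot, hdist, -⟩ :=
    hensels_lemma (F := Polynomial.X ^ 2 - Polynomial.C a) (by rw [hderiv]; simpa using hz)
  exact ⟨α, by simpa [sub_eq_zero] using hroot, hderiv ▸ hdist⟩

open Filter in
theorem redei_padic_convergence_general (p : ℕ) [Fact p.Prime] (hodd : Odd p) (d z : ℤ)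
    (hz : z ^ 2 ≡ d [ZMOD (p : ℤ)]) (hpz : ¬ (p : ℤ) ∣ z) :
    (∀ n : ℕ, 1 ≤ n → ¬ (p : ℤ) ∣ redeiD d z n) ∧
    ∃ α : ℚ_[p], α ^ 2 = (d : ℚ_[p]) ∧
      Tendsto (fun n : ℕ => ((redeiN d z n : ℚ_[p]) / (redeiD d z n : ℚ_[p])))
        atTop (nhds α) := by
  have hp : Prime (p : ℤ) := Nat.prime_iff_prime_int.1 Fact.out
  have hp2 : ¬ (p : ℤ) ∣ 2 := by
    rw [show (2 : ℤ) = (2 : ℕ) from rfl, Int.natCast_dvd_natCast,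
      Nat.prime_dvd_prime_iff_eq Fact.out Nat.prime_two]
    rintro rfl
    exact absurd hodd (by decide)
  have h2z : ‖2 * (z : ℤ_[p])‖ = 1 := by
    have := PadicInt.norm_intCast_eq_one_iff.2
      (IsCoprime.mul_right (hp.coprime_iff_not_dvd.2 hp2) (hp.coprime_iff_not_dvd.2 hpz)).symm
    exact_mod_cast this
  obtain ⟨α, hα, hzα⟩ := PadicInt.exists_sq_eq_of_norm_sq_sub_lt_one (a := d) (z := z)
    (by exact_mod_cast PadicInt.norm_intCast_lt_one_iff.2 hz.symm.dvd) h2z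
  have hαK : (α : ℚ_[p]) ^ 2 = d := by simpa using congrArg ((↑) : ℤ_[p] → ℚ_[p]) hα
  have hzαK : ‖(z : ℚ_[p]) - α‖ < 1 := by
    rw [← norm_neg, neg_sub]; exact_mod_cast hzα
  have h2zK : ‖2 * (z : ℚ_[p])‖ = 1 := by exact_mod_cast h2z
  refine ⟨fun n hn hdvd => ?_, α, hαK, tendsto_redeiN_div_redeiD hαK hzαK h2zK⟩
  exact (Padic.norm_intCast_lt_one_iff.2 hdvd).ne (norm_redeiD_eq_one hαK hzαK h2zK (by omega))

open Filter in
theorem redei_padic_convergence (p : ℕ) [Fact p.Prime] (hodd : Odd p) (d z : ℤ)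
    (hd : ¬ (p : ℤ) ∣ d) (hz : z ^ 2 ≡ d [ZMOD (p : ℤ)]) (hpz : ¬ (p : ℤ) ∣ z) :
    (∀ n : ℕ, 1 ≤ n → ¬ (p : ℤ) ∣ redeiD d z n) ∧
    ∃ α : ℚ_[p], α ^ 2 = (d : ℚ_[p]) ∧
      Tendsto (fun n : ℕ => ((redeiN d z n : ℚ_[p]) / (redeiD d z n : ℚ_[p])))
        atTop (nhds α) :=
  redei_padic_convergence_general p hodd d z hz hpz
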